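/- arXiv:1910.08647 — 11 statements merged into one kernel-verified Lean document; each statement's English description precedes it below -/
import Mathlib

section
/- Soundness of the Conjunction axiom: for any security game (D, {A_d}_{d∈D}, π), any d ∈ D, any a ∈ A_d, and any formulae φ, ψ ∈ Φ, if (d,a) ⊨ A(φ ∧ ψ) then either (d,a) ⊨ Aφ or (d,a) ⊨ Aψ. -/
/-- Formulae of the language Φ: propositional variables, negation, implication,
the necessity modality `N` (`nec`), and the attacker's blameworthiness modality `A` (`blame`). -/
inductive Formula : Type
  | var : ℕ → Formula
  | neg : Formula → Formula
  | imp : Formula → Formula → Formula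
  | nec : Formula → Formula
  | blame : Formula → Formula

namespace Formula

/-- Conjunction, defined through `→` and `¬` in the standard way. -/
def conj (φ ψ : Formula) : Formula := neg (imp φ (neg ψ))

/-- Disjunction, defined through `→` and `¬` in the standard way. -/
def disj (φ ψ : Formula) : Formula := imp (neg φ) ψ

/-- Biconditional, defined through `→` and `¬` in the standard way. -/
def biimp (φ ψ : Formula) : Formula := conj (imp φ ψ) (imp ψ φ)

/-- `R φ` is an abbreviation for `¬(φ → A φ)`. -/
def R (φ : Formula) : Formula := neg (imp φ (blame φ))

end Formula

/-- A formula is a propositional tautology if it evaluates to true under every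
truth assignment that respects `¬` and `→` (treating all other formulae as atoms). -/
def IsTaut (φ : Formula) : Prop :=
  ∀ v : Formula → Bool,
    (∀ ψ, v ψ.neg = !(v ψ)) →
    (∀ ψ χ, v (ψ.imp χ) = (!(v ψ) || v χ)) →
    v φ = true

/-- Provability `⊢ φ` in the logical system for blameworthiness in security games. -/
inductive Prov : Formula → Prop
  | taut {φ} : IsTaut φ → Prov φ
  | truthN (φ : Formula) : Prov ((φ.nec).imp φ)
  | truthA (φ : Formula) : Prov ((φ.blame).imp φ)
  | negIntro (φ : Formula) : Prov (((φ.nec).neg).imp (((φ.nec).neg).nec))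
  | distrib (φ ψ : Formula) : Prov (((φ.imp ψ).nec).imp ((φ.nec).imp (ψ.nec)))
  | unavoid (φ : Formula) : Prov ((φ.nec).imp ((φ.blame).neg))
  | strictCond (φ ψ : Formula) : Prov (((φ.imp ψ).nec).imp ((ψ.blame).imp (φ.imp (φ.blame))))
  | conjAx (φ ψ : Formula) : Prov (((φ.conj ψ).blame).imp ((φ.blame).disj (ψ.blame)))
  | noBlame (φ : Formula) : Prov (((φ.imp (φ.blame)).blame).neg)
  | mp {φ ψ} : Prov (φ.imp ψ) → Prov φ → Prov ψ
  | necRule {φ} : Prov φ → Prov (φ.nec)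

/-- `X ⊢ φ`: provability from the theorems of the logical system together with
additional hypotheses `X`, using only the Modus Ponens rule. -/
inductive ProvFrom (X : Set Formula) : Formula → Prop
  | hyp {φ} : φ ∈ X → ProvFrom X φ
  | thm {φ} : Prov φ → ProvFrom X φ
  | mp {φ ψ} : ProvFrom X (φ.imp ψ) → ProvFrom X φ → ProvFrom X ψ

/-- A set of formulae is consistent if no contradiction is derivable from it. -/
def Consistent (X : Set Formula) : Prop := ¬ ∃ φ, ProvFrom X φ ∧ ProvFrom X φ.neg

/-- A maximal consistent set of formulae. -/
def MaxConsistent (X : Set Formula) : Prop :=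
  Consistent X ∧ ∀ Y, X ⊆ Y → Consistent Y → Y = X

/-- A security game: a set `D` of actions of the defender; for each `d ∈ D` a
nonempty set `A d` of actions of the attacker in response to `d`; and a valuation
assigning to each propositional variable a set of action profiles `(d, a)`. -/
structure SecurityGame where
  D : Type
  A : D → Type
  nonempty : ∀ d, Nonempty (A d)
  val : ℕ → ∀ d : D, A d → Prop

/-- The satisfaction relation `(d, a) ⊨ φ` of a security game. -/
def Sat (G : SecurityGame) : Formula → ∀ d : G.D, G.A d → Prop
  | .var p, d, a => G.val p d a
  | .neg φ, d, a => ¬ Sat G φ d a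
  | .imp φ ψ, d, a => Sat G φ d a → Sat G ψ d a
  | .nec φ, _, _ => ∀ (d' : G.D) (a' : G.A d'), Sat G φ d' a'
  | .blame φ, d, a => Sat G φ d a ∧ ∃ a' : G.A d, ¬ Sat G φ d a'

/-- The set Ω of the canonical game `G(X)`: all maximal consistent sets of formulae
containing `{φ | N φ ∈ X}`. -/
def canonicalOmega (X : Set Formula) : Set (Set Formula) :=
  {ω | MaxConsistent ω ∧ ∀ φ, φ.nec ∈ X → φ ∈ ω}

/-- The indistinguishability relation `ω ∼ ω'` of the canonical game. -/
def simRel (ω ω' : Set Formula) : Prop := ∀ φ : Formula, φ.R ∈ ω ↔ φ.R ∈ ω'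

/-- The `∼`-equivalence class `[δ]` of `δ` inside Ω. -/
def eqClass (X : Set Formula) (δ : Set Formula) : Set (Set Formula) :=
  {ω ∈ canonicalOmega X | simRel δ ω}

/-- The canonical security game `G(X)`. -/
def canonicalGame (X : Set Formula) : SecurityGame where
  D := canonicalOmega X
  A := fun δ => {ω : canonicalOmega X // simRel δ.val ω.val}
  nonempty := fun δ => ⟨⟨δ, fun _ => Iff.rfl⟩⟩
  val := fun p _ a => Formula.var p ∈ a.val.val

theorem sat_conj {G : SecurityGame} {d : G.D} {a : G.A d} {φ ψ : Formula} :
    Sat G (φ.conj ψ) d a ↔ Sat G φ d a ∧ Sat G ψ d a := by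
  simp only [Formula.conj, Sat, Classical.not_imp, not_not]

/-- Soundness of the Conjunction axiom: if `(d,a) ⊨ A(φ ∧ ψ)` then either
`(d,a) ⊨ A φ` or `(d,a) ⊨ A ψ`. -/
theorem conjunction_sound (G : SecurityGame) (d : G.D) (a : G.A d) (φ ψ : Formula)
    (h : Sat G ((φ.conj ψ).blame) d a) :
    Sat G φ.blame d a ∨ Sat G ψ.blame d a := by
  obtain ⟨hconj, a', hfail⟩ := h
  obtain ⟨hφ, hψ⟩ := sat_conj.1 hconj
  by_cases hφ' : Sat G φ d a'
  · exact Or.inr ⟨hψ, a', fun hψ' => hfail (sat_conj.2 ⟨hφ', hψ'⟩)⟩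
  · exact Or.inl ⟨hφ, a', hφ'⟩
end

section
/- Soundness of the No Blame axiom: for any security game (D, {A_d}_{d∈D}, π), any d ∈ D, any a ∈ A_d, and any formula φ ∈ Φ, we have (d,a) ⊭ A(φ → Aφ). -/
/-!
`¬(φ → A φ)` holds at `(d, a)` exactly when `φ` holds at every `(d, a')`, so its truth
depends on `d` alone. A formula whose truth depends only on `d` can never be blamed on the
attacker, and `A(φ → A φ)` is the blame of the negation of such a formula.
-/

theorem not_sat_imp_blame_iff {G : SecurityGame} {φ : Formula} {d : G.D} {a : G.A d} :
    ¬ Sat G (φ.imp φ.blame) d a ↔ ∀ a' : G.A d, Sat G φ d a' := by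
  simp only [Sat]
  constructor
  · intro h a'
    by_contra ha'
    exact h fun hφ => ⟨hφ, a', ha'⟩
  · intro h hblame
    obtain ⟨a', ha'⟩ := (hblame (h a)).2
    exact ha' (h a')

theorem not_sat_blame_of_sat_iff {G : SecurityGame} {ψ : Formula} {d : G.D}
    (hψ : ∀ a a' : G.A d, Sat G ψ d a ↔ Sat G ψ d a') (a : G.A d) :
    ¬ Sat G ψ.blame d a := by
  rintro ⟨ha, a', ha'⟩
  exact ha' ((hψ a a').1 ha)

/-- Soundness of the No Blame axiom: `(d,a) ⊭ A(φ → A φ)`. -/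
theorem noBlame_sound (G : SecurityGame) (d : G.D) (a : G.A d) (φ : Formula) :
    ¬ Sat G ((φ.imp φ.blame).blame) d a := by
  refine not_sat_blame_of_sat_iff (fun a a' => ?_) a
  rw [← not_iff_not, not_sat_imp_blame_iff, not_sat_imp_blame_iff]
end

section
/- Soundness of the Strict Conditional axiom: for any security game (D, {A_d}_{d∈D}, π), any d ∈ D, any a ∈ A_d, and any formulae φ, ψ ∈ Φ, if (d,a) ⊨ N(φ → ψ), (d,a) ⊨ Aψ, and (d,a) ⊨ φ, then (d,a) ⊨ Aφ. -/
/-- Soundness of the Strict Conditional axiom: if `(d,a) ⊨ N(φ → ψ)`,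
`(d,a) ⊨ A ψ`, and `(d,a) ⊨ φ`, then `(d,a) ⊨ A φ`. -/
theorem strictConditional_sound (G : SecurityGame) (d : G.D) (a : G.A d)
    (φ ψ : Formula) (h1 : Sat G ((φ.imp ψ).nec) d a)
    (h2 : Sat G ψ.blame d a) (h3 : Sat G φ d a) :
    Sat G φ.blame d a := by
  obtain ⟨-, a', hψ_fails⟩ := h2
  exact ⟨h3, a', fun hφ => hψ_fails (h1 d a' hφ)⟩
end

section
/- If ⊢ φ ↔ ψ, then ⊢ Aφ → Aψ. -/
/-! Necessitating `⊢ ψ → φ` and applying Strict Conditional gives `⊢ Aφ → (ψ → Aψ)`, while Truth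
and `⊢ φ → ψ` give `⊢ Aφ → ψ`; modus ponens under the common antecedent `Aφ` yields `⊢ Aφ → Aψ`. -/

namespace Prov

theorem mp_taut {φ ψ : Formula} (hφψ : IsTaut (φ.imp ψ)) (hφ : Prov φ) : Prov ψ :=
  mp (taut hφψ) hφ

theorem imp_of_biimp {φ ψ : Formula} (h : Prov (φ.biimp ψ)) : Prov (φ.imp ψ) :=
  mp_taut (by
    intro v hn hi
    simp only [Formula.biimp, Formula.conj, hn, hi]
    cases v φ <;> cases v ψ <;> rfl) h

theorem imp_of_biimp_symm {φ ψ : Formula} (h : Prov (φ.biimp ψ)) : Prov (ψ.imp φ) :=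
  mp_taut (by
    intro v hn hi
    simp only [Formula.biimp, Formula.conj, hn, hi]
    cases v φ <;> cases v ψ <;> rfl) h

theorem imp_trans {φ ψ χ : Formula} (hφψ : Prov (φ.imp ψ)) (hψχ : Prov (ψ.imp χ)) :
    Prov (φ.imp χ) :=
  mp (mp_taut (by
    intro v _ hi
    simp only [hi]
    cases v φ <;> cases v ψ <;> cases v χ <;> rfl) hφψ) hψχ

theorem imp_mp {φ ψ χ : Formula} (hφψχ : Prov (φ.imp (ψ.imp χ))) (hφψ : Prov (φ.imp ψ)) :
    Prov (φ.imp χ) :=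
  mp (mp_taut (by
    intro v _ hi
    simp only [hi]
    cases v φ <;> cases v ψ <;> cases v χ <;> rfl) hφψχ) hφψ

theorem blame_imp_imp_blame {φ ψ : Formula} (hψφ : Prov (ψ.imp φ)) :
    Prov (φ.blame.imp (ψ.imp ψ.blame)) :=
  mp (strictCond ψ φ) (necRule hψφ)

end Prov

/-- If `⊢ φ ↔ ψ`, then `⊢ A φ → A ψ`. -/
theorem blame_congr (φ ψ : Formula) (h : Prov (φ.biimp ψ)) :
    Prov ((φ.blame).imp (ψ.blame)) :=
  Prov.imp_mp (Prov.blame_imp_imp_blame (Prov.imp_of_biimp_symm h))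
    (Prov.imp_trans (Prov.truthA φ) (Prov.imp_of_biimp h))
end

section
/- ⊢ Nφ → Rφ for every formula φ ∈ Φ. -/
theorem isTaut_imp_imp_neg_imp (χ φ ψ : Formula) :
    IsTaut ((χ.imp φ).imp ((χ.imp ψ.neg).imp (χ.imp (φ.imp ψ).neg))) := by
  intro v hneg himp
  simp only [himp, hneg]
  cases v χ <;> cases v φ <;> cases v ψ <;> rfl

theorem Prov.imp_neg_imp {χ φ ψ : Formula} (h₁ : Prov (χ.imp φ)) (h₂ : Prov (χ.imp ψ.neg)) :
    Prov (χ.imp (φ.imp ψ).neg) :=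
  .mp (.mp (.taut (isTaut_imp_imp_neg_imp χ φ ψ)) h₁) h₂

/-- `⊢ N φ → R φ` for every formula `φ`. -/
theorem nec_imp_R (φ : Formula) : Prov ((φ.nec).imp φ.R) :=
  Prov.imp_neg_imp (Prov.truthN φ) (Prov.unavoid φ)
end

section
/- ⊢ R(φ→ψ) → (Rφ → Rψ) for all formulae φ, ψ ∈ Φ. -/
/-! Put `θ := φ ∧ (φ → ψ)`. Necessitating the tautology `θ → ψ` and applying Strict
Conditional gives `Aψ → (θ → Aθ)`, and Conjunction gives `Aθ → Aφ ∨ A(φ → ψ)`. Now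
`R(φ → ψ)` and `Rφ` say that `φ → ψ` and `φ` hold while neither is blamed; hence `θ`
and `ψ` hold, and `Aψ` would force `Aθ` and so blame one of them. Thus `Rψ`. -/

namespace Formula

theorem isTaut_conj_imp_imp (φ ψ : Formula) : IsTaut ((φ.conj (φ.imp ψ)).imp ψ) := by
  intro v hneg himp
  simp only [conj, hneg, himp]
  cases v φ <;> cases v ψ <;> rfl

theorem isTaut_R_imp_R_imp_R_of_blame (φ ψ : Formula) :
    IsTaut ((ψ.blame.imp ((φ.conj (φ.imp ψ)).imp (φ.conj (φ.imp ψ)).blame)).imp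
      (((φ.conj (φ.imp ψ)).blame.imp (φ.blame.disj (φ.imp ψ).blame)).imp
        ((φ.imp ψ).R.imp (φ.R.imp ψ.R)))) := by
  intro v hneg himp
  -- `θ` is an atom under `blame`, so only its top-level truth value may be unfolded.
  generalize hθ : φ.conj (φ.imp ψ) = θ
  have hvθ : v θ = (v φ && (!v φ || v ψ)) := by
    subst hθ
    simp only [conj, hneg, himp]
    cases v φ <;> cases v ψ <;> rfl
  simp only [R, disj, hneg, himp, hvθ]
  cases v φ <;> cases v ψ <;> cases v ψ.blame <;> cases v φ.blame <;>
    cases v (φ.imp ψ).blame <;> cases v θ.blame <;> rfl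

end Formula

theorem Prov.blame_imp_conj_imp_imp_blame (φ ψ : Formula) :
    Prov (ψ.blame.imp ((φ.conj (φ.imp ψ)).imp (φ.conj (φ.imp ψ)).blame)) :=
  (strictCond _ ψ).mp (necRule (taut (Formula.isTaut_conj_imp_imp φ ψ)))

/-- `⊢ R(φ → ψ) → (R φ → R ψ)` for all formulae `φ`, `ψ`. -/
theorem R_distributivity (φ ψ : Formula) :
    Prov (((φ.imp ψ).R).imp ((φ.R).imp ψ.R)) :=
  ((Prov.taut (Formula.isTaut_R_imp_R_imp_R_of_blame φ ψ)).mp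
    (Prov.blame_imp_conj_imp_imp_blame φ ψ)).mp (Prov.conjAx φ (φ.imp ψ))
end

section
/- ⊢ ¬Rφ → R¬Rφ for every formula φ ∈ Φ. -/
/-!
`¬Rφ` is propositionally equivalent to `φ → Aφ`. Strict Conditional (applied to a necessitated
implication) together with Truth for `A` makes `A` respect provable equivalence, so No Blame for
`φ → Aφ` transfers to `⊢ ¬A¬Rφ`; and `¬Aψ` propositionally yields `ψ → Rψ`.
-/

namespace Prov

variable {a b c : Formula}

theorem mp₂ (h : Prov (a.imp (b.imp c))) (ha : Prov a) (hb : Prov b) : Prov c :=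
  mp (mp h ha) hb

theorem imp_trans_s11 (hab : Prov (a.imp b)) (hbc : Prov (b.imp c)) : Prov (a.imp c) :=
  mp₂ (taut fun _ _ _ => by grind) hab hbc

theorem blame_imp_blame_of_equiv (hab : Prov (a.imp b)) (hba : Prov (b.imp a)) :
    Prov (b.blame.imp a.blame) :=
  have hStrict : Prov (b.blame.imp (a.imp a.blame)) := mp (strictCond a b) (necRule hab)
  have hTruth : Prov (b.blame.imp a) := imp_trans_s11 (truthA b) hba
  mp₂ (taut fun _ _ _ => by grind) hStrict hTruth

theorem not_blame_of_equiv_imp_blame (h₁ : Prov (a.imp (b.imp b.blame)))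
    (h₂ : Prov ((b.imp b.blame).imp a)) : Prov a.blame.neg :=
  mp₂ (taut fun _ _ _ => by grind) (noBlame b) (blame_imp_blame_of_equiv h₂ h₁)

theorem imp_R_of_not_blame (h : Prov a.blame.neg) : Prov (a.imp a.R) :=
  mp (taut fun _ _ _ => by grind [Formula.R]) h

end Prov

/-- `⊢ ¬R φ → R ¬R φ` for every formula `φ`. -/
theorem R_negIntrospection (φ : Formula) :
    Prov (((φ.R).neg).imp (((φ.R).neg).R)) := by
  have hElim : Prov (φ.R.neg.imp (φ.imp φ.blame)) := .taut fun _ _ _ => by grind [Formula.R]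
  have hIntro : Prov ((φ.imp φ.blame).imp φ.R.neg) := .taut fun _ _ _ => by grind [Formula.R]
  exact Prov.imp_R_of_not_blame (Prov.not_blame_of_equiv_imp_blame hElim hIntro)
end

section
/- Superdistributivity: if φ₁, …, φₙ ⊢ ψ, then □φ₁, …, □φₙ ⊢ □ψ, where □ is either the modality N or the modality R. -/
namespace Super

open Formula

/-- A fixed tautology used as the empty conjunction. -/
def top : Formula := (Formula.var 0).imp (Formula.var 0)

/-- Conjunction of a list of formulae. -/
def conjL : List Formula → Formula
  | [] => top
  | φ :: L => φ.conj (conjL L)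

lemma isTaut_top : IsTaut top := by
  intro v hn hi; simp only [top, hi]; cases v (Formula.var 0) <;> simp

lemma isTaut_K (φ ψ : Formula) : IsTaut (φ.imp (ψ.imp φ)) := by
  intro v hn hi; simp only [hi]; cases v φ <;> simp

lemma isTaut_S (φ ψ χ : Formula) :
    IsTaut ((φ.imp (ψ.imp χ)).imp ((φ.imp ψ).imp (φ.imp χ))) := by
  intro v hn hi; simp only [hi]
  cases v φ <;> cases v ψ <;> cases v χ <;> simp

lemma isTaut_trans (φ ψ χ : Formula) :
    IsTaut ((φ.imp ψ).imp ((ψ.imp χ).imp (φ.imp χ))) := by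
  intro v hn hi; simp only [hi]
  cases v φ <;> cases v ψ <;> cases v χ <;> simp

lemma isTaut_conjI (φ ψ : Formula) : IsTaut (φ.imp (ψ.imp (φ.conj ψ))) := by
  intro v hn hi; simp only [Formula.conj, hi, hn]
  cases v φ <;> cases v ψ <;> simp

lemma isTaut_conjE1 (φ ψ : Formula) : IsTaut ((φ.conj ψ).imp φ) := by
  intro v hn hi; simp only [Formula.conj, hi, hn]
  cases v φ <;> cases v ψ <;> simp

lemma isTaut_conjE2 (φ ψ : Formula) : IsTaut ((φ.conj ψ).imp ψ) := by
  intro v hn hi; simp only [Formula.conj, hi, hn]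
  cases v φ <;> cases v ψ <;> simp

lemma isTaut_Rintro (φ : Formula) :
    IsTaut (φ.imp (((φ.blame).neg).imp φ.R)) := by
  intro v hn hi; simp only [Formula.R, hi, hn]
  cases v φ <;> cases v φ.blame <;> simp

lemma isTaut_Relim1 (φ : Formula) : IsTaut (φ.R.imp φ) := by
  intro v hn hi; simp only [Formula.R, hi, hn]
  cases v φ <;> cases v φ.blame <;> simp

lemma isTaut_Relim2 (φ : Formula) : IsTaut (φ.R.imp ((φ.blame).neg)) := by
  intro v hn hi; simp only [Formula.R, hi, hn]
  cases v φ <;> cases v φ.blame <;> simp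

lemma isTaut_conjNoBlame (φ ψ : Formula) :
    IsTaut ((((φ.conj ψ).blame).imp ((φ.blame).disj (ψ.blame))).imp
      (((φ.blame).neg).imp (((ψ.blame).neg).imp (((φ.conj ψ).blame).neg)))) := by
  intro v hn hi; simp only [Formula.disj, hi, hn]
  cases v (φ.conj ψ).blame <;> cases v φ.blame <;> cases v ψ.blame <;> simp

lemma isTaut_strictUse (φ ψ : Formula) :
    IsTaut (((ψ.blame).imp (φ.imp (φ.blame))).imp
      (φ.imp (((φ.blame).neg).imp ((ψ.blame).neg)))) := by
  intro v hn hi; simp only [hi, hn]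
  cases v ψ.blame <;> cases v φ <;> cases v φ.blame <;> simp

/-- Projection out of a list conjunction. -/
lemma conj_proj {φ : Formula} : ∀ {L : List Formula}, φ ∈ L → Prov ((conjL L).imp φ)
  | χ :: L, h => by
    rcases List.mem_cons.mp h with h | h
    · subst h; exact Prov.taut (isTaut_conjE1 _ _)
    · exact Prov.mp (Prov.mp (Prov.taut (isTaut_trans _ _ _))
        (Prov.taut (isTaut_conjE2 χ (conjL L)))) (conj_proj h)

/-- Deduction-style lemma: hypotheses can be collected into a conjunction. -/
lemma ded_conj {L : List Formula} {ψ : Formula} (h : ProvFrom {φ | φ ∈ L} ψ) :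
    Prov ((conjL L).imp ψ) := by
  induction h with
  | hyp hm => exact conj_proj hm
  | thm hp => exact Prov.mp (Prov.taut (isTaut_K _ _)) hp
  | mp _ _ ih1 ih2 => exact Prov.mp (Prov.mp (Prov.taut (isTaut_S _ _ _)) ih1) ih2

lemma prov_NconjI (φ ψ : Formula) :
    Prov ((φ.nec).imp ((ψ.nec).imp ((φ.conj ψ).nec))) := by
  have h1 : Prov ((φ.imp (ψ.imp (φ.conj ψ))).nec) :=
    Prov.necRule (Prov.taut (isTaut_conjI φ ψ))
  have h2 : Prov ((φ.nec).imp ((ψ.imp (φ.conj ψ)).nec)) :=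
    Prov.mp (Prov.distrib _ _) h1
  exact Prov.mp (Prov.mp (Prov.taut (isTaut_trans _ _ _)) h2)
    (Prov.distrib ψ (φ.conj ψ))

lemma Nconj_list (X : Set Formula) :
    ∀ L : List Formula, (∀ φ ∈ L, φ.nec ∈ X) → ProvFrom X ((conjL L).nec)
  | [], _ => ProvFrom.thm (Prov.necRule (Prov.taut isTaut_top))
  | φ :: L, h =>
    ProvFrom.mp
      (ProvFrom.mp (ProvFrom.thm (prov_NconjI φ (conjL L)))
        (ProvFrom.hyp (h φ List.mem_cons_self)))
      (Nconj_list X L (fun χ hχ => h χ (List.mem_cons_of_mem φ hχ)))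

lemma pf_Rconj {X : Set Formula} {φ ψ : Formula}
    (h1 : ProvFrom X φ.R) (h2 : ProvFrom X ψ.R) : ProvFrom X (φ.conj ψ).R := by
  have a1 : ProvFrom X φ := ProvFrom.mp (.thm (Prov.taut (isTaut_Relim1 φ))) h1
  have a2 : ProvFrom X ((φ.blame).neg) := ProvFrom.mp (.thm (Prov.taut (isTaut_Relim2 φ))) h1
  have b1 : ProvFrom X ψ := ProvFrom.mp (.thm (Prov.taut (isTaut_Relim1 ψ))) h2
  have b2 : ProvFrom X ((ψ.blame).neg) := ProvFrom.mp (.thm (Prov.taut (isTaut_Relim2 ψ))) h2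
  have c : ProvFrom X (φ.conj ψ) :=
    ProvFrom.mp (ProvFrom.mp (.thm (Prov.taut (isTaut_conjI φ ψ))) a1) b1
  have nb : ProvFrom X (((φ.conj ψ).blame).neg) :=
    ProvFrom.mp (ProvFrom.mp
      (ProvFrom.mp (.thm (Prov.taut (isTaut_conjNoBlame φ ψ))) (.thm (Prov.conjAx φ ψ))) a2) b2
  exact ProvFrom.mp (ProvFrom.mp (.thm (Prov.taut (isTaut_Rintro _))) c) nb

lemma Rconj_list (X : Set Formula) :
    ∀ L : List Formula, (∀ φ ∈ L, φ.R ∈ X) → ProvFrom X ((conjL L).R)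
  | [], _ => by
    have h : Prov top := Prov.taut isTaut_top
    have hnb : Prov ((top.blame).neg) := Prov.mp (Prov.unavoid top) (Prov.necRule h)
    exact ProvFrom.thm (Prov.mp (Prov.mp (Prov.taut (isTaut_Rintro top)) h) hnb)
  | φ :: L, h =>
    pf_Rconj (ProvFrom.hyp (h φ List.mem_cons_self))
      (Rconj_list X L (fun χ hχ => h χ (List.mem_cons_of_mem φ hχ)))

lemma pf_Rmp {X : Set Formula} {φ ψ : Formula}
    (hN : Prov ((φ.imp ψ).nec)) (h : ProvFrom X φ.R) : ProvFrom X ψ.R := by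
  have himp : Prov (φ.imp ψ) := Prov.mp (Prov.truthN _) hN
  have hsc : Prov ((ψ.blame).imp (φ.imp (φ.blame))) := Prov.mp (Prov.strictCond φ ψ) hN
  have a1 : ProvFrom X φ := ProvFrom.mp (.thm (Prov.taut (isTaut_Relim1 φ))) h
  have a2 : ProvFrom X ((φ.blame).neg) := ProvFrom.mp (.thm (Prov.taut (isTaut_Relim2 φ))) h
  have hψ : ProvFrom X ψ := ProvFrom.mp (.thm himp) a1
  have hnb : ProvFrom X ((ψ.blame).neg) :=
    ProvFrom.mp (ProvFrom.mp
      (ProvFrom.mp (.thm (Prov.taut (isTaut_strictUse φ ψ))) (.thm hsc)) a1) a2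
  exact ProvFrom.mp (ProvFrom.mp (.thm (Prov.taut (isTaut_Rintro ψ))) hψ) hnb

end Super

/-- Superdistributivity: if `φ₁, …, φₙ ⊢ ψ`, then `□φ₁, …, □φₙ ⊢ □ψ`, where `□`
is either the modality `N` or the modality `R`. -/
theorem superdistributivity (box : Formula → Formula)
    (hbox : box = Formula.nec ∨ box = Formula.R)
    (L : List Formula) (ψ : Formula)
    (h : ProvFrom {φ | φ ∈ L} ψ) :
    ProvFrom (box '' {φ | φ ∈ L}) (box ψ) := by
  rcases hbox with hb | hb <;> subst hb
  · have hd := Super.ded_conj h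
    have hNimp : Prov (((Super.conjL L).nec).imp (ψ.nec)) :=
      Prov.mp (Prov.distrib _ _) (Prov.necRule hd)
    exact ProvFrom.mp (.thm hNimp)
      (Super.Nconj_list _ L (fun φ hm => ⟨φ, hm, rfl⟩))
  · exact Super.pf_Rmp (Prov.necRule (Super.ded_conj h))
      (Super.Rconj_list _ L (fun φ hm => ⟨φ, hm, rfl⟩))
end

section
/- Positive introspection: ⊢ □φ → □□φ, where □ is either the modality N or the modality R, for every formula φ ∈ Φ. -/
/-!
Both `N` and `R` are S5 modalities: they satisfy necessitation, K, T and 5, and in any such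
modality 4 follows by the usual chain `□φ → ¬□¬□φ → □¬□¬□φ → □□φ`. For `N` these are axioms.
For `R φ = φ ∧ ¬A φ`, T is propositional, necessitation comes from Unavoidability, 5 from
No Blame, and K from Strict Conditional together with Conjunction.
-/

namespace Prov

variable {φ ψ χ : Formula}

theorem imp_trans_s13 (h₁ : Prov (φ.imp ψ)) (h₂ : Prov (ψ.imp χ)) : Prov (φ.imp χ) :=
  mp (mp (taut fun v _ hi => by simp only [hi]; grind) h₁) h₂

theorem imp_neg_comm (h : Prov (φ.imp ψ.neg)) : Prov (ψ.imp φ.neg) :=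
  mp (taut fun v hn hi => by simp only [hn, hi]; grind) h

theorem neg_imp_comm (h : Prov (φ.neg.imp ψ)) : Prov (ψ.neg.imp φ) :=
  mp (taut fun v hn hi => by simp only [hn, hi]; grind) h

theorem mt (h₁ : Prov (φ.imp ψ)) (h₂ : Prov ψ.neg) : Prov φ.neg :=
  mp (mp (taut fun v hn hi => by simp only [hn, hi]; grind) h₁) h₂

theorem blame_imp_imp_blame_s13 (h : Prov (φ.imp ψ)) : Prov (ψ.blame.imp (φ.imp φ.blame)) :=
  mp (strictCond φ ψ) (necRule h)

theorem blame_imp_blame_of_equiv_s13 (h₁ : Prov (φ.imp ψ)) (h₂ : Prov (ψ.imp φ)) :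
    Prov (ψ.blame.imp φ.blame) :=
  mp (mp (mp (taut fun v _ hi => by simp only [hi]; grind) (blame_imp_imp_blame_s13 h₁))
    (truthA ψ)) h₂

theorem not_blame_imp_imp_R (φ : Formula) : Prov (φ.blame.neg.imp (φ.imp φ.R)) :=
  taut fun v hn hi => by simp only [Formula.R, hn, hi]; grind

theorem truthR (φ : Formula) : Prov (φ.R.imp φ) :=
  taut fun v hn hi => by simp only [Formula.R, hn, hi]; grind

theorem necRuleR (h : Prov φ) : Prov φ.R :=
  mp (mp (not_blame_imp_imp_R φ) (mp (unavoid φ) (necRule h))) h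

/-- `¬R φ` is `¬¬(φ → A φ)`, which No Blame says is never blameworthy. -/
theorem negIntroR (φ : Formula) : Prov (φ.R.neg.imp φ.R.neg.R) := by
  have h : Prov φ.R.neg.blame.neg :=
    mt (blame_imp_blame_of_equiv_s13 (taut fun v hn hi => by simp only [Formula.R, hn, hi]; grind)
      (taut fun v hn hi => by simp only [Formula.R, hn, hi]; grind)) (noBlame φ)
  exact mp (not_blame_imp_imp_R _) h

/-- If `A ψ`, Strict Conditional gives `A((φ → ψ) ∧ φ)`, and then Conjunction gives
`A(φ → ψ) ∨ A φ`, which `R(φ → ψ)` and `R φ` both exclude. -/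
theorem distribR (φ ψ : Formula) : Prov ((φ.imp ψ).R.imp (φ.R.imp ψ.R)) := by
  have h : Prov (ψ.blame.imp (((φ.imp ψ).conj φ).imp ((φ.imp ψ).conj φ).blame)) :=
    blame_imp_imp_blame_s13 (taut fun v hn hi => by simp only [Formula.conj, hn, hi]; grind)
  refine mp (mp (taut fun v hn hi => ?_) h) (conjAx (φ.imp ψ) φ)
  simp only [Formula.R, Formula.conj, Formula.disj, hn, hi]
  grind

end Prov

structure IsS5Modality (M : Formula → Formula) : Prop where
  necRule {φ : Formula} : Prov φ → Prov (M φ)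
  distrib (φ ψ : Formula) : Prov ((M (φ.imp ψ)).imp ((M φ).imp (M ψ)))
  truth (φ : Formula) : Prov ((M φ).imp φ)
  negIntro (φ : Formula) : Prov ((M φ).neg.imp (M (M φ).neg))

theorem IsS5Modality.four {M : Formula → Formula} (hM : IsS5Modality M) (φ : Formula) :
    Prov ((M φ).imp (M (M φ))) := by
  have h₁ : Prov ((M φ).imp (M (M φ).neg).neg) := Prov.imp_neg_comm (hM.truth (M φ).neg)
  have h₂ : Prov ((M (M φ).neg).neg.imp (M φ)) := Prov.neg_imp_comm (hM.negIntro φ)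
  exact Prov.imp_trans_s13 h₁ <| Prov.imp_trans_s13 (hM.negIntro (M φ).neg) <|
    Prov.mp (hM.distrib _ _) (hM.necRule h₂)

theorem isS5Modality_nec : IsS5Modality Formula.nec :=
  ⟨Prov.necRule, Prov.distrib, Prov.truthN, Prov.negIntro⟩

theorem isS5Modality_R : IsS5Modality Formula.R :=
  ⟨Prov.necRuleR, Prov.distribR, Prov.truthR, Prov.negIntroR⟩

/-- Positive introspection: `⊢ □φ → □□φ`, where `□` is either the modality `N`
or the modality `R`. -/
theorem positive_introspection (box : Formula → Formula)
    (hbox : box = Formula.nec ∨ box = Formula.R) (φ : Formula) :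
    Prov ((box φ).imp (box (box φ))) := by
  rcases hbox with rfl | rfl
  exacts [isS5Modality_nec.four φ, isS5Modality_R.four φ]
end

section
/- In the canonical game G(X): for any δ ∈ Ω, any ω ∈ [δ], and any formula with Aφ ∈ ω, we have (i) φ ∈ ω and (ii) there exists ω' ∈ [δ] such that φ ∉ ω'. -/
/-! Truth gives `φ ∈ ω`. For the witness, observe that both `N` and `R` behave inside maximal
consistent sets as S5 modalities (K, T, 5 and necessitation follow from the axioms, hence so
does 4), and that `A φ ∈ ω` forces `R φ ∉ ω`. Hence `{β | R β ∈ ω}` does not prove `φ`, and a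
Lindenbaum extension `ω'` of it together with `¬φ` is the required witness: `ω' ∈ Ω` by 4 for `N`
and `N ψ → R ψ`, while `ω ∼ ω'` by 4 and 5 for `R`.

Propositional steps are taken semantically: membership in a maximal consistent set commutes with
`¬` and `→`, and a formula lying in every maximal consistent set is provable. -/

open Formula

section Tautologies

variable (a b c : Formula)

theorem isTaut_imp_self : IsTaut (a.imp a) := by
  intro v _ hi; simp only [hi]; cases v a <;> rfl

theorem isTaut_imp_imp_self : IsTaut (b.imp (a.imp b)) := by
  intro v _ hi; simp only [hi]; cases v a <;> cases v b <;> rfl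

theorem isTaut_imp_distrib :
    IsTaut ((a.imp (b.imp c)).imp ((a.imp b).imp (a.imp c))) := by
  intro v _ hi; simp only [hi]; cases v a <;> cases v b <;> cases v c <;> rfl

theorem isTaut_neg_imp : IsTaut (a.neg.imp (a.imp b)) := by
  intro v hn hi; simp only [hi, hn]; cases v a <;> cases v b <;> rfl

theorem isTaut_by_contra : IsTaut ((a.neg.imp b).imp ((a.neg.imp b.neg).imp a)) := by
  intro v hn hi; simp only [hi, hn]; cases v a <;> cases v b <;> rfl

end Tautologies

namespace ProvFrom

variable {X Y : Set Formula} {φ ψ : Formula}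

theorem mono (hXY : X ⊆ Y) (h : ProvFrom X φ) : ProvFrom Y φ := by
  induction h with
  | hyp h => exact hyp (hXY h)
  | thm h => exact thm h
  | mp _ _ ih₁ ih₂ => exact mp ih₁ ih₂

theorem imp_of_insert (h : ProvFrom (insert φ X) ψ) : ProvFrom X (φ.imp ψ) := by
  induction h with
  | @hyp χ h =>
    rcases Set.mem_insert_iff.mp h with rfl | h
    · exact thm (Prov.taut (isTaut_imp_self χ))
    · exact mp (thm (Prov.taut (isTaut_imp_imp_self φ χ))) (hyp h)
  | @thm χ h => exact mp (thm (Prov.taut (isTaut_imp_imp_self φ χ))) (thm h)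
  | @mp χ θ _ _ ih₁ ih₂ => exact mp (mp (thm (Prov.taut (isTaut_imp_distrib φ χ θ))) ih₁) ih₂

theorem prov_of_empty (h : ProvFrom ∅ φ) : Prov φ := by
  induction h with
  | hyp h => exact absurd h (Set.notMem_empty _)
  | thm h => exact h
  | mp _ _ ih₁ ih₂ => exact ih₁.mp ih₂

theorem exists_of_sUnion {c : Set (Set Formula)} (hc : IsChain (· ⊆ ·) c) (hne : c.Nonempty)
    (h : ProvFrom (⋃₀ c) φ) : ∃ Y ∈ c, ProvFrom Y φ := by
  induction h with
  | hyp h =>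
    obtain ⟨Y, hY, hφ⟩ := h
    exact ⟨Y, hY, hyp hφ⟩
  | thm h =>
    obtain ⟨Y, hY⟩ := hne
    exact ⟨Y, hY, thm h⟩
  | mp _ _ ih₁ ih₂ =>
    obtain ⟨Y₁, hY₁, h₁⟩ := ih₁
    obtain ⟨Y₂, hY₂, h₂⟩ := ih₂
    obtain ⟨Z, hZ, h₁Z, h₂Z⟩ := hc.directedOn Y₁ hY₁ Y₂ hY₂
    exact ⟨Z, hZ, mp (h₁.mono h₁Z) (h₂.mono h₂Z)⟩

end ProvFrom

section Lindenbaum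

variable {X : Set Formula} {φ : Formula}

theorem Consistent.sUnion {c : Set (Set Formula)} (hc : IsChain (· ⊆ ·) c) (hne : c.Nonempty)
    (hcons : ∀ Y ∈ c, Consistent Y) : Consistent (⋃₀ c) := by
  rintro ⟨χ, h₁, h₂⟩
  obtain ⟨Y₁, hY₁, h₁⟩ := ProvFrom.exists_of_sUnion hc hne h₁
  obtain ⟨Y₂, hY₂, h₂⟩ := ProvFrom.exists_of_sUnion hc hne h₂
  obtain ⟨Z, hZ, h₁Z, h₂Z⟩ := hc.directedOn Y₁ hY₁ Y₂ hY₂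
  exact hcons Z hZ ⟨χ, h₁.mono h₁Z, h₂.mono h₂Z⟩

theorem exists_maxConsistent_superset (h : Consistent X) : ∃ ω, X ⊆ ω ∧ MaxConsistent ω := by
  obtain ⟨ω, hXω, hω⟩ := zorn_subset_nonempty {Y | Consistent Y}
    (fun c hcS hc hne => ⟨⋃₀ c, Consistent.sUnion hc hne hcS, fun _ => Set.subset_sUnion_of_mem⟩)
    X h
  exact ⟨ω, hXω, hω.prop, fun Y hωY hY => (hω.eq_of_subset hY hωY).symm⟩

theorem consistent_insert_neg (h : ¬ ProvFrom X φ) : Consistent (insert φ.neg X) := by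
  rintro ⟨χ, h₁, h₂⟩
  exact h <| ProvFrom.mp (ProvFrom.mp (ProvFrom.thm (Prov.taut (isTaut_by_contra φ χ)))
    h₁.imp_of_insert) h₂.imp_of_insert

theorem exists_maxConsistent_notMem (h : ¬ ProvFrom X φ) :
    ∃ ω, X ⊆ ω ∧ MaxConsistent ω ∧ φ ∉ ω := by
  obtain ⟨ω, hω, hωM⟩ := exists_maxConsistent_superset (consistent_insert_neg h)
  exact ⟨ω, (Set.subset_insert _ _).trans hω, hωM,
    fun hφ => hωM.1 ⟨φ, .hyp hφ, .hyp (hω (Set.mem_insert _ _))⟩⟩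

end Lindenbaum

namespace MaxConsistent

variable {ω : Set Formula} (hω : MaxConsistent ω) {φ ψ : Formula}
include hω

theorem mem_of_provFrom (h : ProvFrom ω φ) : φ ∈ ω := by
  have hcons : Consistent (insert φ ω) := fun ⟨χ, h₁, h₂⟩ =>
    hω.1 ⟨χ, .mp h₁.imp_of_insert h, .mp h₂.imp_of_insert h⟩
  exact hω.2 _ (Set.subset_insert _ _) hcons ▸ Set.mem_insert φ ω

theorem mem_of_prov (h : Prov φ) : φ ∈ ω :=
  hω.mem_of_provFrom (.thm h)

theorem mem_of_imp_mem (h : φ.imp ψ ∈ ω) (hφ : φ ∈ ω) : ψ ∈ ω :=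
  hω.mem_of_provFrom (.mp (.hyp h) (.hyp hφ))

theorem neg_mem_iff : φ.neg ∈ ω ↔ φ ∉ ω := by
  refine ⟨fun h hφ => hω.1 ⟨φ, .hyp hφ, .hyp h⟩, fun h => ?_⟩
  have hφ : ¬ ProvFrom ω φ := fun hφ => h (hω.mem_of_provFrom hφ)
  exact hω.2 _ (Set.subset_insert _ _) (consistent_insert_neg hφ) ▸ Set.mem_insert _ ω

theorem imp_mem_iff : φ.imp ψ ∈ ω ↔ (φ ∈ ω → ψ ∈ ω) := by
  refine ⟨hω.mem_of_imp_mem, fun h => ?_⟩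
  by_cases hφ : φ ∈ ω
  · exact hω.mem_of_imp_mem (hω.mem_of_prov (.taut (isTaut_imp_imp_self φ ψ))) (h hφ)
  · exact hω.mem_of_imp_mem (hω.mem_of_prov (.taut (isTaut_neg_imp φ ψ)))
      ((hω.neg_mem_iff).2 hφ)

theorem conj_mem_iff : φ.conj ψ ∈ ω ↔ φ ∈ ω ∧ ψ ∈ ω := by
  simp only [conj, hω.neg_mem_iff, hω.imp_mem_iff, Classical.not_imp, not_not]

theorem R_mem_iff : φ.R ∈ ω ↔ φ ∈ ω ∧ φ.blame ∉ ω := by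
  simp only [R, hω.neg_mem_iff, hω.imp_mem_iff, Classical.not_imp]

end MaxConsistent

theorem prov_of_forall_mem {φ : Formula} (h : ∀ ω, MaxConsistent ω → φ ∈ ω) : Prov φ := by
  by_contra hφ
  obtain ⟨ω, -, hω, hφω⟩ := exists_maxConsistent_notMem (X := ∅) fun h => hφ h.prov_of_empty
  exact hφω (h ω hω)

/-- A modality satisfying, inside every maximal consistent set, the axioms of S5 other than 4. -/
structure IsS5Modality_s14 (M : Formula → Formula) : Prop where
  necessitation : ∀ {φ}, Prov φ → Prov (M φ)
  mem_of_imp_mem : ∀ {ω}, MaxConsistent ω → ∀ {φ ψ}, M (φ.imp ψ) ∈ ω → M φ ∈ ω → M ψ ∈ ω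
  mem_of_mem : ∀ {ω}, MaxConsistent ω → ∀ {φ}, M φ ∈ ω → φ ∈ ω
  mem_of_notMem : ∀ {ω}, MaxConsistent ω → ∀ {φ}, M φ ∉ ω → M (M φ).neg ∈ ω

namespace IsS5Modality_s14

variable {M : Formula → Formula} (hM : IsS5Modality_s14 M) {ω : Set Formula} (hω : MaxConsistent ω)
include hM hω

theorem mem_of_prov {φ : Formula} (h : Prov φ) : M φ ∈ ω :=
  hω.mem_of_prov (hM.necessitation h)

theorem mem_of_provFrom {φ : Formula} (h : ProvFrom {β | M β ∈ ω} φ) : M φ ∈ ω := by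
  induction h with
  | hyp h => exact h
  | thm h => exact hM.mem_of_prov hω h
  | mp _ _ ih₁ ih₂ => exact hM.mem_of_imp_mem hω ih₁ ih₂

/-- Via the chain `M φ → ¬M¬M φ → M¬M¬M φ → M M φ`, whose steps are T, 5 and K. -/
theorem four_s14 {φ : Formula} (h : M φ ∈ ω) : M (M φ) ∈ ω := by
  set A := (M (M φ).neg).neg
  have hA : Prov (A.imp (M φ)) := prov_of_forall_mem fun ω' hω' =>
    hω'.imp_mem_iff.2 fun hAω' =>
      by_contra fun hφ => hω'.neg_mem_iff.1 hAω' (hM.mem_of_notMem hω' hφ)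
  have hAω : A ∈ ω := hω.neg_mem_iff.2 fun hMA => hω.neg_mem_iff.1 (hM.mem_of_mem hω hMA) h
  have hMAω : M A ∈ ω := hM.mem_of_notMem hω (hω.neg_mem_iff.1 hAω)
  exact hM.mem_of_imp_mem hω (hM.mem_of_prov hω hA) hMAω

end IsS5Modality_s14

theorem isS5Modality_nec_s14 : IsS5Modality_s14 Formula.nec where
  necessitation := Prov.necRule
  mem_of_imp_mem hω _ _ h := hω.mem_of_imp_mem (hω.mem_of_imp_mem (hω.mem_of_prov (.distrib _ _)) h)
  mem_of_mem hω _ := hω.mem_of_imp_mem (hω.mem_of_prov (.truthN _))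
  mem_of_notMem hω _ h := hω.mem_of_imp_mem (hω.mem_of_prov (.negIntro _)) (hω.neg_mem_iff.2 h)

namespace MaxConsistent

variable {ω : Set Formula} (hω : MaxConsistent ω) {φ ψ : Formula}
include hω

theorem R_mem_of_nec_mem (h : φ.nec ∈ ω) : φ.R ∈ ω :=
  hω.R_mem_iff.2 ⟨isS5Modality_nec_s14.mem_of_mem hω h,
    hω.neg_mem_iff.1 (hω.mem_of_imp_mem (hω.mem_of_prov (.unavoid φ)) h)⟩

theorem R_mem_of_nec_imp_mem (h : (φ.imp ψ).nec ∈ ω) (hφ : φ.R ∈ ω) : ψ.R ∈ ω := by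
  obtain ⟨hφ, hAφ⟩ := hω.R_mem_iff.1 hφ
  have hstrict := hω.imp_mem_iff.1 (hω.mem_of_imp_mem (hω.mem_of_prov (.strictCond φ ψ)) h)
  refine hω.R_mem_iff.2 ⟨?_, fun hAψ => hAφ (hω.imp_mem_iff.1 (hstrict hAψ) hφ)⟩
  exact hω.imp_mem_iff.1 (isS5Modality_nec_s14.mem_of_mem hω h) hφ

theorem R_conj_mem (hφ : φ.R ∈ ω) (hψ : ψ.R ∈ ω) : (φ.conj ψ).R ∈ ω := by
  obtain ⟨hφ, hAφ⟩ := hω.R_mem_iff.1 hφ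
  obtain ⟨hψ, hAψ⟩ := hω.R_mem_iff.1 hψ
  refine hω.R_mem_iff.2 ⟨hω.conj_mem_iff.2 ⟨hφ, hψ⟩, fun hA => ?_⟩
  have hdisj := hω.imp_mem_iff.1 (hω.mem_of_imp_mem (hω.mem_of_prov (.conjAx φ ψ)) hA)
  exact hAψ (hdisj (hω.neg_mem_iff.2 hAφ))

end MaxConsistent

theorem isS5Modality_R_s14 : IsS5Modality_s14 Formula.R where
  necessitation h :=
    prov_of_forall_mem fun _ hω => hω.R_mem_of_nec_mem (hω.mem_of_prov (.necRule h))
  mem_of_imp_mem {_} hω φ ψ h hφ := by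
    have hmp : Prov ((φ.conj (φ.imp ψ)).imp ψ) := prov_of_forall_mem fun _ hω' =>
      hω'.imp_mem_iff.2 fun h => hω'.imp_mem_iff.1 (hω'.conj_mem_iff.1 h).2 (hω'.conj_mem_iff.1 h).1
    exact hω.R_mem_of_nec_imp_mem (hω.mem_of_prov (.necRule hmp)) (hω.R_conj_mem hφ h)
  mem_of_mem hω _ h := (hω.R_mem_iff.1 h).1
  mem_of_notMem {ω} hω φ h := by
    -- `¬R φ` is `¬¬(φ → A φ)`, and `A (φ → A φ)` is excluded by No Blame.
    set ψ := φ.imp φ.blame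
    have hψ : ψ ∈ ω := by_contra fun hψ => h (hω.neg_mem_iff.2 hψ)
    have hdni : Prov (ψ.imp ψ.neg.neg) := prov_of_forall_mem fun _ hω' =>
      hω'.imp_mem_iff.2 fun h => hω'.neg_mem_iff.2 fun hn => hω'.neg_mem_iff.1 hn h
    have hstrict := hω.imp_mem_iff.1
      (hω.mem_of_imp_mem (hω.mem_of_prov (.strictCond _ _)) (hω.mem_of_prov (.necRule hdni)))
    refine hω.R_mem_iff.2 ⟨hω.neg_mem_iff.2 h, fun hA => ?_⟩
    exact hω.neg_mem_iff.1 (hω.mem_of_prov (.noBlame φ)) (hω.imp_mem_iff.1 (hstrict hA) hψ)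

section CanonicalGame

variable {X ω ω' : Set Formula} (hω' : MaxConsistent ω') (hsub : {β | β.R ∈ ω} ⊆ ω')
include hω' hsub

theorem mem_canonicalOmega_of_R_subset (hX : MaxConsistent X) (hω : ω ∈ canonicalOmega X) :
    ω' ∈ canonicalOmega X :=
  ⟨hω', fun _ hψ => hsub (hω.1.R_mem_of_nec_mem (hω.2 _ (isS5Modality_nec_s14.four_s14 hX hψ)))⟩

theorem simRel_of_R_subset (hω : MaxConsistent ω) : simRel ω ω' := by
  refine fun χ => ⟨fun h => hsub (isS5Modality_R_s14.four_s14 hω h), fun h => by_contra fun hχ => ?_⟩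
  exact hω'.neg_mem_iff.1 (hsub (isS5Modality_R_s14.mem_of_notMem hω hχ)) h

end CanonicalGame

theorem blame_member_canonical_general (X : Set Formula) (hX : MaxConsistent X)
    (δ : Set Formula)
    (ω : Set Formula) (hω : ω ∈ eqClass X δ)
    (φ : Formula) (h : φ.blame ∈ ω) :
    φ ∈ ω ∧ ∃ ω' ∈ eqClass X δ, φ ∉ ω' := by
  obtain ⟨hωΩ, hδω⟩ := hω
  have hωM := hωΩ.1
  have hRφ : φ.R ∉ ω := fun hR => (hωM.R_mem_iff.1 hR).2 h
  have hW : ¬ ProvFrom {β | β.R ∈ ω} φ := fun hW => hRφ (isS5Modality_R_s14.mem_of_provFrom hωM hW)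
  obtain ⟨ω', hsub, hω'M, hφω'⟩ := exists_maxConsistent_notMem hW
  refine ⟨hωM.mem_of_imp_mem (hωM.mem_of_prov (.truthA φ)) h, ω', ⟨?_, ?_⟩, hφω'⟩
  · exact mem_canonicalOmega_of_R_subset hω'M hsub hX hωΩ
  · exact fun χ => (hδω χ).trans (simRel_of_R_subset hω'M hsub hωM χ)

/-- In the canonical game `G(X)`: for any `δ ∈ Ω`, any `ω ∈ [δ]`, and any formula
with `A φ ∈ ω`, we have (i) `φ ∈ ω` and (ii) there exists `ω' ∈ [δ]` with `φ ∉ ω'`. -/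
theorem blame_member_canonical (X : Set Formula) (hX : MaxConsistent X)
    (δ : Set Formula) (hδ : δ ∈ canonicalOmega X)
    (ω : Set Formula) (hω : ω ∈ eqClass X δ)
    (φ : Formula) (h : φ.blame ∈ ω) :
    φ ∈ ω ∧ ∃ ω' ∈ eqClass X δ, φ ∉ ω' :=
  blame_member_canonical_general X hX δ ω hω φ h
end

section
/- In the canonical game G(X): for any δ ∈ Ω, any ω ∈ [δ], and any formula φ ∈ Φ, if ¬(φ → Aφ) ∈ ω, then φ ∈ ω' for every ω' ∈ [δ]. -/
theorem ProvFrom.of_insert {X : Set Formula} {φ ψ : Formula}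
    (h : ProvFrom (insert φ X) ψ) (hφ : ProvFrom X φ) : ProvFrom X ψ := by
  induction h with
  | hyp hmem =>
    rcases hmem with rfl | hmem
    · exact hφ
    · exact .hyp hmem
  | thm ht => exact .thm ht
  | mp _ _ ih₁ ih₂ => exact .mp ih₁ ih₂

theorem MaxConsistent.mem_of_provFrom_s15 {X : Set Formula} (hX : MaxConsistent X) {φ : Formula}
    (h : ProvFrom X φ) : φ ∈ X := by
  have hcons : Consistent (insert φ X) := by
    rintro ⟨ψ, hψ, hnψ⟩
    exact hX.1 ⟨ψ, hψ.of_insert h, hnψ.of_insert h⟩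
  rw [← hX.2 _ (Set.subset_insert φ X) hcons]
  exact Set.mem_insert φ X

theorem MaxConsistent.mem_of_prov_imp {X : Set Formula} (hX : MaxConsistent X) {φ ψ : Formula}
    (himp : Prov (φ.imp ψ)) (hφ : φ ∈ X) : ψ ∈ X :=
  hX.mem_of_provFrom_s15 (.mp (.thm himp) (.hyp hφ))

theorem isTaut_neg_imp_imp (φ ψ : Formula) : IsTaut (((φ.imp ψ).neg).imp φ) := by
  intro v hneg himp
  rw [himp, hneg, himp]
  cases v φ <;> simp

theorem R_member_canonical_general (X : Set Formula)
    (δ : Set Formula)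
    (ω : Set Formula) (hω : ω ∈ eqClass X δ)
    (φ : Formula) (h : (φ.imp φ.blame).neg ∈ ω) :
    ∀ ω' ∈ eqClass X δ, φ ∈ ω' := by
  intro ω' hω'
  have hR : φ.R ∈ ω' := (hω'.2 φ).mp ((hω.2 φ).mpr h)
  exact hω'.1.1.mem_of_prov_imp (.taut (isTaut_neg_imp_imp φ φ.blame)) hR

/-- In the canonical game `G(X)`: for any `δ ∈ Ω`, any `ω ∈ [δ]`, and any formula
`φ`, if `¬(φ → A φ) ∈ ω`, then `φ ∈ ω'` for every `ω' ∈ [δ]`. -/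
theorem R_member_canonical (X : Set Formula) (hX : MaxConsistent X)
    (δ : Set Formula) (hδ : δ ∈ canonicalOmega X)
    (ω : Set Formula) (hω : ω ∈ eqClass X δ)
    (φ : Formula) (h : (φ.imp φ.blame).neg ∈ ω) :
    ∀ ω' ∈ eqClass X δ, φ ∈ ω' :=
  R_member_canonical_general X δ ω hω φ h
end
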